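/- arXiv:1810.03882 — 2 statements merged into one kernel-verified Lean document; each statement's English description precedes it below -/
import Mathlib

section
/- Weak strong monotonicity of the ε-smooth relative entropy of coherence: let {K_k} be incoherent Kraus operators, ρ_k = K_kρK_k†/p_k, τ the optimizer for C_{r,ε}(ρ), τ_k = K_kτK_k†/q_k. If additionally S(ρ_k‖τ_k) ≤ ε for each k, then ∑_k q_k · C_{r,ε}(ρ_k) ≤ C_{r,ε}(ρ), where the weights are the probabilities q_k = Tr(K_kτK_k†) of the optimizer τ. -/
open scoped ComplexOrder BigOperators
open Matrix

/-- A density matrix: positive semidefinite with unit trace. -/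
def IsDensity {n : Type*} [Fintype n] (A : Matrix n n ℂ) : Prop :=
  A.PosSemidef ∧ A.trace = 1

/-- The ε-smooth relative entropy of coherence
`C_{r,ε}(σ) = min{C_r(τ) : S(σ‖τ) ≤ ε}`. -/
noncomputable def Creps {d : ℕ}
    (S : Matrix (Fin d) (Fin d) ℂ → Matrix (Fin d) (Fin d) ℂ → ℝ)
    (Cr : Matrix (Fin d) (Fin d) ℂ → ℝ)
    (ε : ℝ) (σ : Matrix (Fin d) (Fin d) ℂ) : ℝ :=
  sInf (Cr '' {τ | IsDensity τ ∧ S σ τ ≤ ε})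

/-! Each `τ_k` is feasible for the minimisation defining `C_{r,ε}(ρ_k)`, so
`C_{r,ε}(ρ_k) ≤ C_r(τ_k)`; weighting by the probabilities `q_k ≥ 0` of `τ` and applying strong
monotonicity of `C_r` gives `∑ q_k C_{r,ε}(ρ_k) ≤ C_r(τ) = C_{r,ε}(ρ)`. -/

lemma Matrix.PosSemidef.re_trace_nonneg {n : Type*} [Fintype n] {A : Matrix n n ℂ}
    (hA : A.PosSemidef) : 0 ≤ A.trace.re :=
  (Complex.nonneg_iff.mp hA.trace_nonneg).1

lemma Creps_le {d : ℕ} {S : Matrix (Fin d) (Fin d) ℂ → Matrix (Fin d) (Fin d) ℂ → ℝ}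
    {Cr : Matrix (Fin d) (Fin d) ℂ → ℝ} {ε : ℝ} {σ τ : Matrix (Fin d) (Fin d) ℂ}
    (hCr : BddBelow (Set.range Cr)) (hτ : IsDensity τ) (hστ : S σ τ ≤ ε) :
    Creps S Cr ε σ ≤ Cr τ :=
  csInf_le (hCr.mono (Set.image_subset_range _ _)) ⟨τ, ⟨hτ, hστ⟩, rfl⟩

theorem epsilon_smooth_relative_entropy_weak_strong_monotonicity_general
    {d m : ℕ}
    (S : Matrix (Fin d) (Fin d) ℂ → Matrix (Fin d) (Fin d) ℂ → ℝ)
    (Cr : Matrix (Fin d) (Fin d) ℂ → ℝ)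
    (hCrnn : ∀ σ, 0 ≤ Cr σ)
    -- incoherent Kraus operators
    (K : Fin m → Matrix (Fin d) (Fin d) ℂ)
    (ρ τ : Matrix (Fin d) (Fin d) ℂ)
    (ε : ℝ)
    -- τ attains the minimum defining C_{r,ε}(ρ)
    (hτdens : IsDensity τ)
    (hτopt : Cr τ = Creps S Cr ε ρ)
    -- post-measurement states and probabilities
    (q : Fin m → ℝ) (ρk τk : Fin m → Matrix (Fin d) (Fin d) ℂ)
    (hq : ∀ k, q k = ((K k * τ * (K k)ᴴ).trace).re)
    (hτkdens : ∀ k, IsDensity (τk k))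
    -- strong monotonicity of C_r under the incoherent Kraus operators
    (hsm : ∑ k, q k * Cr (τk k) ≤ Cr τ)
    -- the additional requirement S(ρ_k‖τ_k) ≤ ε for each k
    (hball : ∀ k, S (ρk k) (τk k) ≤ ε) :
    ∑ k, q k * Creps S Cr ε (ρk k) ≤ Creps S Cr ε ρ := by
  have hq_nonneg : ∀ k, 0 ≤ q k := fun k =>
    hq k ▸ (hτdens.1.mul_mul_conjTranspose_same (K k)).re_trace_nonneg
  have hCr_bdd : BddBelow (Set.range Cr) := ⟨0, Set.forall_mem_range.2 hCrnn⟩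
  calc ∑ k, q k * Creps S Cr ε (ρk k) ≤ ∑ k, q k * Cr (τk k) :=
        Finset.sum_le_sum fun k _ =>
          mul_le_mul_of_nonneg_left (Creps_le hCr_bdd (hτkdens k) (hball k)) (hq_nonneg k)
    _ ≤ Cr τ := hsm
    _ = Creps S Cr ε ρ := hτopt

/-- Weak strong monotonicity of the ε-smooth relative entropy of coherence:
`∑_k q_k C_{r,ε}(ρ_k) ≤ C_{r,ε}(ρ)`, weighted by the outcome probabilities
`q_k` of the optimizer `τ`. -/
theorem epsilon_smooth_relative_entropy_weak_strong_monotonicity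
    {d m : ℕ}
    (S : Matrix (Fin d) (Fin d) ℂ → Matrix (Fin d) (Fin d) ℂ → ℝ)
    (Cr : Matrix (Fin d) (Fin d) ℂ → ℝ)
    (hCrnn : ∀ σ, 0 ≤ Cr σ)
    -- incoherent Kraus operators
    (K : Fin m → Matrix (Fin d) (Fin d) ℂ)
    (hK : ∑ k, (K k)ᴴ * K k = 1)
    (ρ τ : Matrix (Fin d) (Fin d) ℂ) (hρ : IsDensity ρ)
    (ε : ℝ)
    -- τ attains the minimum defining C_{r,ε}(ρ)
    (hτdens : IsDensity τ) (hτball : S ρ τ ≤ ε)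
    (hτopt : Cr τ = Creps S Cr ε ρ)
    -- post-measurement states and probabilities
    (p q : Fin m → ℝ) (ρk τk : Fin m → Matrix (Fin d) (Fin d) ℂ)
    (hp : ∀ k, p k = ((K k * ρ * (K k)ᴴ).trace).re)
    (hq : ∀ k, q k = ((K k * τ * (K k)ᴴ).trace).re)
    (hρk : ∀ k, ρk k = ((p k : ℂ)⁻¹) • (K k * ρ * (K k)ᴴ))
    (hτk : ∀ k, τk k = ((q k : ℂ)⁻¹) • (K k * τ * (K k)ᴴ))
    (hρkdens : ∀ k, IsDensity (ρk k)) (hτkdens : ∀ k, IsDensity (τk k))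
    -- strong monotonicity of C_r under the incoherent Kraus operators
    (hsm : ∑ k, q k * Cr (τk k) ≤ Cr τ)
    -- the additional requirement S(ρ_k‖τ_k) ≤ ε for each k
    (hball : ∀ k, S (ρk k) (τk k) ≤ ε) :
    ∑ k, q k * Creps S Cr ε (ρk k) ≤ Creps S Cr ε ρ :=
  epsilon_smooth_relative_entropy_weak_strong_monotonicity_general S Cr hCrnn K ρ τ ε hτdens hτopt q
    ρk τk hq hτkdens hsm hball
end

section
/- For the qubit pure states |a⟩ = |0⟩ and |b⟩ = cosθ|0⟩ + sinθ|1⟩ with θ ∈ (0, π/2), the trace distance satisfies D_tr(|a⟩⟨a|, |b⟩⟨b|) = |sinθ|; hence for any ε > 0 and any coherence measure C with C(|b⟩⟨b|) > 0, choosing θ with |sinθ| ≤ ε gives C_{ε,max}(|a⟩⟨a|) ≥ C(|b⟩⟨b|) > 0 even though |a⟩⟨a| is incoherent. Thus C_{ε,max} violates the faithfulness condition (C1). -/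
open scoped ComplexOrder

/-- The positive semidefinite square root (removed from Mathlib; old definition restored). -/
noncomputable def Matrix.PosSemidef.sqrt {n : Type*} [Fintype n] [DecidableEq n]
    {A : Matrix n n ℂ} (hA : A.PosSemidef) : Matrix n n ℂ :=
  (hA.1.eigenvectorUnitary : Matrix n n ℂ) * Matrix.diagonal ((↑) ∘ Real.sqrt ∘ hA.1.eigenvalues) *
    (star (hA.1.eigenvectorUnitary : Matrix n n ℂ))

/-- The trace distance `½ Tr|ρ − τ|`. -/
noncomputable def traceDist {n : Type*} [Fintype n] [DecidableEq n]
    (ρ τ : Matrix n n ℂ) : ℝ :=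
  ((Matrix.posSemidef_conjTranspose_mul_self (ρ - τ)).sqrt.trace).re / 2

/-- The dual ε-smooth measure of coherence (maximization). -/
noncomputable def CmaxQ {n : Type*} [Fintype n] [DecidableEq n]
    (C : Matrix n n ℂ → ℝ) (ε : ℝ) (ρ : Matrix n n ℂ) : ℝ :=
  sSup (C '' {τ | IsDensity τ ∧ traceDist ρ τ ≤ ε})

/-!
A traceless 2 × 2 matrix `D` satisfies `D * D = -det D • 1` (Cayley–Hamilton). The difference
`D = ρ - τ` of two qubit density matrices is Hermitian and traceless, so `Dᴴ D` is the scalar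
`-det D`, its square root is `√(-det D) • 1`, and `D_tr(ρ, τ) = √(-det D)`. For `|0⟩⟨0|` and the
state along `(cos θ, sin θ)` one finds `det D = -sin² θ`, so `|b⟩⟨b|` lies in the ε-ball over
which `C_{ε,max}(|a⟩⟨a|)` takes its supremum.
-/

namespace Matrix

lemma IsHermitian.eigenvalues_eq_of_eq_smul_one {𝕜 n : Type*} [RCLike 𝕜] [Fintype n]
    [DecidableEq n] {A : Matrix n n 𝕜} (hA : A.IsHermitian) {c : ℝ}
    (h : A = (c : 𝕜) • 1) (i : n) : hA.eigenvalues i = c := by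
  subst h
  have hv := hA.eigenvectorBasis.orthonormal.1 i
  rw [hA.eigenvalues_eq, smul_mulVec, one_mulVec, dotProduct_smul, smul_eq_mul,
    dotProduct_comm, ← EuclideanSpace.inner_eq_star_dotProduct, inner_self_eq_norm_sq_to_K, hv]
  simp

lemma PosSemidef.sqrt_eq_smul_one {n : Type*} [Fintype n] [DecidableEq n]
    {A : Matrix n n ℂ} (hA : A.PosSemidef) {c : ℝ} (h : A = (c : ℂ) • 1) :
    hA.sqrt = (√c : ℂ) • 1 := by
  have hdiag : diagonal (((↑) : ℝ → ℂ) ∘ Real.sqrt ∘ hA.1.eigenvalues) = (√c : ℂ) • 1 := by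
    ext i j
    simp [diagonal_apply, one_apply, hA.1.eigenvalues_eq_of_eq_smul_one h]
  rw [PosSemidef.sqrt, hdiag, mul_smul_comm, mul_one, smul_mul_assoc,
    Unitary.mul_star_self_of_mem (SetLike.coe_mem _)]

lemma mul_self_eq_neg_det_smul_one {R : Type*} [CommRing R] (A : Matrix (Fin 2) (Fin 2) R)
    (h : A.trace = 0) : A * A = -A.det • 1 := by
  rw [trace_fin_two] at h
  ext i j
  fin_cases i <;> fin_cases j <;>
    simp [mul_apply, det_fin_two, eq_neg_of_add_eq_zero_right h] <;> ring

end Matrix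

open Matrix

lemma isDensity_vecMulVec_star {n : Type*} [Fintype n] {b : n → ℂ} (hb : b ⬝ᵥ star b = 1) :
    IsDensity (vecMulVec b (star b)) :=
  ⟨posSemidef_vecMulVec_self_star b, by rw [trace_vecMulVec, hb]⟩

lemma dotProduct_star_cos_sin (θ : ℝ) :
    ![(Real.cos θ : ℂ), (Real.sin θ : ℂ)] ⬝ᵥ star ![(Real.cos θ : ℂ), (Real.sin θ : ℂ)] = 1 := by
  simp only [dotProduct, Fin.sum_univ_two, Pi.star_apply, cons_val_zero, cons_val_one,
    Complex.star_def, Complex.conj_ofReal]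
  norm_cast
  linear_combination Real.cos_sq_add_sin_sq θ

lemma traceDist_eq_of_conjTranspose_mul_self_eq_smul_one {n : Type*} [Fintype n]
    [DecidableEq n] {ρ τ : Matrix n n ℂ} {c : ℝ} (h : (ρ - τ)ᴴ * (ρ - τ) = (c : ℂ) • 1) :
    traceDist ρ τ = Fintype.card n * √c / 2 := by
  rw [traceDist, PosSemidef.sqrt_eq_smul_one _ h]
  simp [mul_comm]

lemma traceDist_eq_sqrt_of_det_sub_eq {ρ τ : Matrix (Fin 2) (Fin 2) ℂ} (hρ : IsDensity ρ)
    (hτ : IsDensity τ) {c : ℝ} (hdet : (ρ - τ).det = -(c : ℂ)) : traceDist ρ τ = √c := by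
  have htrace : (ρ - τ).trace = 0 := by rw [trace_sub, hρ.2, hτ.2, sub_self]
  have hsq : (ρ - τ)ᴴ * (ρ - τ) = (c : ℂ) • 1 := by
    rw [(hρ.1.isHermitian.sub hτ.1.isHermitian).eq, mul_self_eq_neg_det_smul_one _ htrace, hdet,
      neg_neg]
  rw [traceDist_eq_of_conjTranspose_mul_self_eq_smul_one hsq]
  simp

lemma det_vecMulVec_one_zero_sub_vecMulVec_ofReal (c s : ℝ) :
    (vecMulVec ![1, 0] (star ![1, 0]) -
      vecMulVec ![(c : ℂ), (s : ℂ)] (star ![(c : ℂ), (s : ℂ)])).det = -((s ^ 2 : ℝ) : ℂ) := by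
  simp only [det_fin_two, Matrix.sub_apply, vecMulVec_apply, Pi.star_apply, cons_val_zero,
    cons_val_one, star_one, star_zero, Complex.star_def, Complex.conj_ofReal]
  push_cast
  ring

lemma le_CmaxQ {n : Type*} [Fintype n] [DecidableEq n] {C : Matrix n n ℂ → ℝ} {ε : ℝ}
    {ρ τ : Matrix n n ℂ} (hbdd : BddAbove (C '' {τ | IsDensity τ ∧ traceDist ρ τ ≤ ε}))
    (hτ : IsDensity τ) (hρτ : traceDist ρ τ ≤ ε) : C τ ≤ CmaxQ C ε ρ :=
  le_csSup hbdd ⟨τ, ⟨hτ, hρτ⟩, rfl⟩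

theorem dual_epsilon_smooth_not_faithful_general
    (θ : ℝ)
    (a b : Fin 2 → ℂ)
    (ha : a = ![1, 0])
    (hb : b = ![(Real.cos θ : ℂ), (Real.sin θ : ℂ)])
    (ρa ρb : Matrix (Fin 2) (Fin 2) ℂ)
    (hρa : ρa = Matrix.vecMulVec a (star a))
    (hρb : ρb = Matrix.vecMulVec b (star b))
    (C : Matrix (Fin 2) (Fin 2) ℂ → ℝ)
    (hCb : 0 < C ρb)
    (ε : ℝ) (hsin : |Real.sin θ| ≤ ε)
    (hbdd : BddAbove (C '' {τ | IsDensity τ ∧ traceDist ρa τ ≤ ε})) :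
    traceDist ρa ρb = |Real.sin θ| ∧
      C ρb ≤ CmaxQ C ε ρa ∧ 0 < CmaxQ C ε ρa ∧ Matrix.IsDiag ρa := by
  subst ha hb
  have hρa_dens : IsDensity ρa := hρa ▸ isDensity_vecMulVec_star (by
    simp only [dotProduct, Fin.sum_univ_two, Pi.star_apply, cons_val_zero, cons_val_one]
    simp)
  have hρb_dens : IsDensity ρb := hρb ▸ isDensity_vecMulVec_star (dotProduct_star_cos_sin θ)
  have hdist : traceDist ρa ρb = |Real.sin θ| := by
    rw [traceDist_eq_sqrt_of_det_sub_eq hρa_dens hρb_dens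
      (hρa ▸ hρb ▸ det_vecMulVec_one_zero_sub_vecMulVec_ofReal _ _), Real.sqrt_sq_eq_abs]
  have hle := le_CmaxQ hbdd hρb_dens (hdist ▸ hsin)
  refine ⟨hdist, hle, hCb.trans_le hle, ?_⟩
  intro i j hij
  rw [hρa]
  fin_cases i <;> fin_cases j <;> first | exact absurd rfl hij | simp [vecMulVec_apply]

/-- For qubit pure states `|a⟩ = |0⟩` and `|b⟩ = cosθ|0⟩+sinθ|1⟩` with
`θ ∈ (0,π/2)`, the trace distance is `|sin θ|`; hence for `|sin θ| ≤ ε` we get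
`C_{ε,max}(|a⟩⟨a|) ≥ C(|b⟩⟨b|) > 0`, although `|a⟩⟨a|` is incoherent, so the dual
ε-smooth quantifier violates faithfulness. -/
theorem dual_epsilon_smooth_not_faithful
    (θ : ℝ) (hθ0 : 0 < θ) (hθ : θ < Real.pi / 2)
    (a b : Fin 2 → ℂ)
    (ha : a = ![1, 0])
    (hb : b = ![(Real.cos θ : ℂ), (Real.sin θ : ℂ)])
    (ρa ρb : Matrix (Fin 2) (Fin 2) ℂ)
    (hρa : ρa = Matrix.vecMulVec a (star a))
    (hρb : ρb = Matrix.vecMulVec b (star b))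
    (C : Matrix (Fin 2) (Fin 2) ℂ → ℝ)
    (hCnn : ∀ τ, 0 ≤ C τ)
    (hCb : 0 < C ρb)
    (ε : ℝ) (hε : 0 < ε) (hsin : |Real.sin θ| ≤ ε)
    (hbdd : BddAbove (C '' {τ | IsDensity τ ∧ traceDist ρa τ ≤ ε})) :
    traceDist ρa ρb = |Real.sin θ| ∧
      C ρb ≤ CmaxQ C ε ρa ∧ 0 < CmaxQ C ε ρa ∧ Matrix.IsDiag ρa :=
  dual_epsilon_smooth_not_faithful_general θ a b ha hb ρa ρb hρa hρb C hCb ε hsin hbdd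
end
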